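/- Let A be a Perron-like real m×m matrix with principal eigenvalue s, Π₁ the spectral projection onto GE_s(A), and V a nonsingular real m×m matrix with ‖V‖ = 1; set Y = Π₁V and X_n(t) = Σ_{k=0}^n (t^k/k!)·A^k·V. Then there exist constants κ, B₀, δ > 0 such that for every n ∈ ℕ and every t ≥ 1 with X_n(t) ≠ 0: ‖ X_n(t)/‖X_n(t)‖ − e^{t(A−sI)}Y/‖e^{t(A−sI)}Y‖ ‖ ≤ B₀·e^{−δt} + (2/κ)·((t‖A‖)^{n+1}/(n+1)!)·e^{2‖A‖t}. -/

import Mathlib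

open Matrix

/-- Matrix exponential of a real square matrix. -/
noncomputable def mexp {m : ℕ} (M : Matrix (Fin m) (Fin m) ℝ) : Matrix (Fin m) (Fin m) ℝ :=
  NormedSpace.exp M

/-- Frobenius norm of a real square matrix. -/
noncomputable def fnorm {m : ℕ} (M : Matrix (Fin m) (Fin m) ℝ) : ℝ :=
  Real.sqrt (∑ i, ∑ j, (M i j) ^ 2)

/-- Euclidean norm of a vector in ℝ^m. -/
noncomputable def vnorm {m : ℕ} (x : Fin m → ℝ) : ℝ :=
  Real.sqrt (∑ i, (x i) ^ 2)

/-- Frobenius inner product ⟨M, N⟩ = trace(Mᵀ N). -/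
def finner {m : ℕ} (M N : Matrix (Fin m) (Fin m) ℝ) : ℝ :=
  ∑ i, ∑ j, M i j * N i j

/-- The generalized eigenspace GE_s(A) = {x : (A - s•I)^k x = 0 for some k ≥ 1},
as a submodule of ℝ^m. -/
def GEsub {m : ℕ} (A : Matrix (Fin m) (Fin m) ℝ) (s : ℝ) : Submodule ℝ (Fin m → ℝ) where
  carrier := {x | ∃ k : ℕ, 1 ≤ k ∧ ((A - s • 1) ^ k).mulVec x = 0}
  zero_mem' := ⟨1, le_refl 1, Matrix.mulVec_zero _⟩
  add_mem' := by
    rintro a b ⟨k, hk, ha⟩ ⟨l, hl, hb⟩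
    refine ⟨max k l, le_trans hk (le_max_left _ _), ?_⟩
    have h1 : ((A - s • 1) ^ (max k l)).mulVec a = 0 := by
      have h : (A - s • 1) ^ (max k l) = (A - s • 1) ^ (max k l - k) * (A - s • 1) ^ k := by
        rw [← pow_add]; congr 1; omega
      rw [h, ← Matrix.mulVec_mulVec, ha, Matrix.mulVec_zero]
    have h2 : ((A - s • 1) ^ (max k l)).mulVec b = 0 := by
      have h : (A - s • 1) ^ (max k l) = (A - s • 1) ^ (max k l - l) * (A - s • 1) ^ l := by
        rw [← pow_add]; congr 1; omega
      rw [h, ← Matrix.mulVec_mulVec, hb, Matrix.mulVec_zero]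
    rw [Matrix.mulVec_add, h1, h2, add_zero]
  smul_mem' := by
    rintro c a ⟨k, hk, ha⟩
    exact ⟨k, hk, by rw [Matrix.mulVec_smul, ha, smul_zero]⟩

/-- Partial sum X_n(t) = ∑_{k=0}^n (t^k/k!) A^k V is `texp A n t * V` where -/
noncomputable def texp {m : ℕ} (A : Matrix (Fin m) (Fin m) ℝ) (n : ℕ) (t : ℝ) :
    Matrix (Fin m) (Fin m) ℝ :=
  ∑ k ∈ Finset.range (n + 1), (t ^ k / (Nat.factorial k : ℝ)) • A ^ k

/-!
Split the error at `G = exp (t A) V`. The truncated series `X_n(t)` differs from `G` by the tail of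
the exponential series, at most `(t‖A‖)^(n+1)/(n+1)! · exp (t‖A‖) ‖V‖`, while
`‖G‖ ≥ exp (-t‖A‖) ‖V‖`; normalizing costs the factor `2 / ‖G‖`.

The direction of `G` is that of `exp (t M) V` with `M = A - s I`, and `V = P V + (1 - P) V`.
Over `ℂ`, `(1 - P) V` splits into generalized eigenvectors of `A` for eigenvalues `μ ≠ s`, on which
`exp (t M)` is `exp (t (μ - s))` times a polynomial in `t`; so `exp (t M) (1 - P) V` decays like
`exp (-δ t)`. On the range of `P` the matrix `M` is nilpotent, so `‖exp (-t M) P‖` grows only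
polynomially and `‖P V‖ ≤ ‖exp (-t M) P‖ ‖exp (t M) P V‖` keeps `exp (t M) P V` from decaying
faster than `exp (-δ t / 2)`.
-/

open NormedSpace Filter Topology

lemma Real.hasSum_pow_div_factorial (x : ℝ) :
    HasSum (fun n => x ^ n / n.factorial) (Real.exp x) :=
  Real.exp_eq_exp_ℝ ▸ expSeries_div_hasSum_exp x

lemma Real.pow_add_div_factorial_le {x : ℝ} (hx : 0 ≤ x) (n j : ℕ) :
    x ^ (j + n) / (j + n).factorial ≤ x ^ n / n.factorial * (x ^ j / j.factorial) := by
  rw [div_mul_div_comm, ← pow_add, add_comm n j]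
  gcongr
  rw [add_comm]
  exact_mod_cast Nat.le_of_dvd (Nat.factorial_pos _)
    (Nat.factorial_mul_factorial_dvd_factorial_add n j)

lemma Real.pow_div_factorial_le_div_pow_mul_exp {ε t : ℝ} (hε : 0 < ε) (ht : 0 ≤ t) (k : ℕ) :
    t ^ k / k.factorial ≤ Real.exp (ε * t) / ε ^ k := by
  rw [le_div_iff₀ (by positivity), div_mul_eq_mul_div, ← mul_pow, mul_comm t]
  exact Real.pow_div_factorial_le_exp _ (by positivity) k

lemma norm_pow_mul_le {R : Type*} [NormedRing R] (N X : R) (k : ℕ) :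
    ‖N ^ k * X‖ ≤ ‖N‖ ^ k * ‖X‖ := by
  induction k with
  | zero => simp
  | succ k ih =>
    rw [pow_succ', mul_assoc, pow_succ', mul_assoc]
    exact (norm_mul_le _ _).trans (mul_le_mul_of_nonneg_left ih (norm_nonneg N))

lemma norm_inv_norm_smul_sub_inv_norm_smul_le {E : Type*} [NormedAddCommGroup E] [NormedSpace ℝ E]
    (u : E) {v : E} (hv : v ≠ 0) : ‖‖u‖⁻¹ • u - ‖v‖⁻¹ • v‖ ≤ 2 * ‖u - v‖ / ‖v‖ := by
  rcases eq_or_ne u 0 with rfl | hu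
  · have hv' : ‖v‖ ≠ 0 := norm_ne_zero_iff.mpr hv
    rw [norm_zero, _root_.inv_zero, zero_smul, zero_sub, norm_neg, zero_sub, norm_neg, norm_smul,
      norm_inv, norm_norm, inv_mul_cancel₀ hv', mul_div_assoc, div_self hv']
    norm_num
  have hscale : ‖(‖u‖⁻¹ - ‖v‖⁻¹) • u‖ ≤ ‖u - v‖ / ‖v‖ := by
    have h : (‖u‖⁻¹ - ‖v‖⁻¹) * ‖u‖ = (‖v‖ - ‖u‖) / ‖v‖ := by
      field_simp [norm_ne_zero_iff.mpr hu, norm_ne_zero_iff.mpr hv]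
    rw [norm_smul, Real.norm_eq_abs, ← abs_norm u, ← abs_mul, abs_norm, h, abs_div, abs_norm,
      norm_sub_rev]
    gcongr
    exact abs_norm_sub_norm_le v u
  calc ‖‖u‖⁻¹ • u - ‖v‖⁻¹ • v‖ = ‖(‖u‖⁻¹ - ‖v‖⁻¹) • u + ‖v‖⁻¹ • (u - v)‖ := by
        rw [sub_smul, smul_sub]; abel_nf
    _ ≤ ‖u - v‖ / ‖v‖ + ‖u - v‖ / ‖v‖ := by
        refine norm_add_le_of_le hscale ?_
        rw [norm_smul, norm_inv, norm_norm, inv_mul_eq_div]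
    _ = 2 * ‖u - v‖ / ‖v‖ := by ring

lemma inv_norm_smul_smul_of_pos {E : Type*} [NormedAddCommGroup E] [NormedSpace ℝ E]
    {c : ℝ} (hc : 0 < c) (v : E) : ‖c • v‖⁻¹ • (c • v) = ‖v‖⁻¹ • v := by
  rw [norm_smul, Real.norm_of_nonneg hc.le, smul_smul, mul_inv, mul_right_comm,
    inv_mul_cancel₀ hc.ne', one_mul]

lemma exp_algebraMap_add {𝕂 𝔸 : Type*} [RCLike 𝕂] [NormedRing 𝔸] [NormedAlgebra 𝕂 𝔸]
    [CompleteSpace 𝔸] (r : 𝕂) (a : 𝔸) : exp (algebraMap 𝕂 𝔸 r + a) = exp r • exp a := by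
  rw [exp_add_of_commute_of_mem_ball (𝕂 := 𝕂) (Algebra.commute_algebraMap_left r a),
    ← algebraMap_exp_comm, ← Algebra.smul_def] <;> simp [expSeries_radius_eq_top]

section BanachAlgebra

variable {𝔸 : Type*} [NormedRing 𝔸] [NormedAlgebra ℝ 𝔸] [CompleteSpace 𝔸]

lemma hasSum_exp_mul (N X : 𝔸) :
    HasSum (fun k => (k.factorial : ℝ)⁻¹ • (N ^ k * X)) (exp N * X) := by
  simpa only [smul_mul_assoc] using (exp_series_hasSum_exp' (𝕂 := ℝ) N).mul_right X

lemma norm_exp_mul_sub_sum_le (N X : 𝔸) (n : ℕ) :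
    ‖exp N * X - ∑ k ∈ Finset.range n, (k.factorial : ℝ)⁻¹ • (N ^ k * X)‖
      ≤ ‖N‖ ^ n / n.factorial * Real.exp ‖N‖ * ‖X‖ := by
  have h := hasSum_exp_mul N X
  rw [← h.tsum_eq, ← h.summable.sum_add_tsum_nat_add n, add_sub_cancel_left]
  refine tsum_of_norm_bounded
    (((Real.hasSum_pow_div_factorial ‖N‖).mul_left _).mul_right ‖X‖) fun j => ?_
  calc ‖((j + n).factorial : ℝ)⁻¹ • (N ^ (j + n) * X)‖
      ≤ ‖N‖ ^ (j + n) / (j + n).factorial * ‖X‖ := by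
        rw [norm_smul, Real.norm_of_nonneg (by positivity), inv_mul_eq_div, div_mul_eq_mul_div]
        gcongr
        exact norm_pow_mul_le N X _
    _ ≤ _ := by gcongr; exact Real.pow_add_div_factorial_le (norm_nonneg N) n j

lemma norm_exp_mul_le (N X : 𝔸) : ‖exp N * X‖ ≤ Real.exp ‖N‖ * ‖X‖ := by
  simpa using norm_exp_mul_sub_sum_le N X 0

lemma exp_neg_mul_exp (N : 𝔸) : exp (-N) * exp N = 1 := by
  rw [← exp_add_of_commute_of_mem_ball (𝕂 := ℝ) (Commute.refl N).neg_left, neg_add_cancel,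
    exp_zero] <;> simp [expSeries_radius_eq_top]

lemma norm_le_exp_norm_mul_norm_exp_mul (N X : 𝔸) : ‖X‖ ≤ Real.exp ‖N‖ * ‖exp N * X‖ := by
  simpa [← mul_assoc, exp_neg_mul_exp] using norm_exp_mul_le (-N) (exp N * X)

lemma norm_mul_le_norm_exp_neg_mul_mul_norm_exp_mul {p x : 𝔸} (hp : IsIdempotentElem p)
    (hpx : Commute p x) (v : 𝔸) : ‖p * v‖ ≤ ‖exp (-x) * p‖ * ‖exp x * (p * v)‖ := by
  have h : p * v = exp (-x) * p * (exp x * (p * v)) := by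
    rw [mul_assoc, ← mul_assoc p, hpx.exp_right.eq, mul_assoc, ← mul_assoc p, hp.eq, ← mul_assoc,
      exp_neg_mul_exp, one_mul]
  exact (congrArg norm h).trans_le (norm_mul_le _ _)

lemma exp_smul_mul_eq_sum_of_pow_mul_eq_zero {N X : 𝔸} {d : ℕ} (hd : N ^ d * X = 0) (t : ℝ) :
    exp (t • N) * X = ∑ k ∈ Finset.range d, (t ^ k / k.factorial) • (N ^ k * X) := by
  have hterm (k : ℕ) :
      (k.factorial : ℝ)⁻¹ • ((t • N) ^ k * X) = (t ^ k / k.factorial) • (N ^ k * X) := by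
    rw [smul_pow, smul_mul_assoc, smul_smul, inv_mul_eq_div]
  refine (hasSum_exp_mul (t • N) X).unique ?_
  simp only [hterm]
  refine hasSum_sum_of_ne_finset_zero fun k hk => ?_
  rw [Finset.mem_range, not_lt] at hk
  rw [← Nat.sub_add_cancel hk, pow_add N, mul_assoc, hd, mul_zero, smul_zero]

lemma exists_norm_exp_smul_mul_le_of_pow_mul_eq_zero {N X : 𝔸} {d : ℕ} (hd : N ^ d * X = 0)
    {ε : ℝ} (hε : 0 < ε) :
    ∃ C, ∀ t : ℝ, 0 ≤ t → ‖exp (t • N) * X‖ ≤ C * Real.exp (ε * t) := by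
  refine ⟨∑ k ∈ Finset.range d, ‖N ^ k * X‖ / ε ^ k, fun t ht => ?_⟩
  rw [exp_smul_mul_eq_sum_of_pow_mul_eq_zero hd, Finset.sum_mul]
  refine (norm_sum_le _ _).trans (Finset.sum_le_sum fun k _ => ?_)
  calc ‖(t ^ k / k.factorial) • (N ^ k * X)‖ = ‖N ^ k * X‖ * (t ^ k / k.factorial) := by
        rw [norm_smul, Real.norm_of_nonneg (by positivity), mul_comm]
    _ ≤ ‖N ^ k * X‖ * (Real.exp (ε * t) / ε ^ k) :=
        mul_le_mul_of_nonneg_left (Real.pow_div_factorial_le_div_pow_mul_exp hε ht k)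
          (norm_nonneg _)
    _ = ‖N ^ k * X‖ / ε ^ k * Real.exp (ε * t) := by ring

lemma norm_normalized_sum_sub_normalized_exp_mul_le (N X : 𝔸) (hX : X ≠ 0) (n : ℕ) :
    ‖‖∑ k ∈ Finset.range (n + 1), (k.factorial : ℝ)⁻¹ • (N ^ k * X)‖⁻¹ •
        ∑ k ∈ Finset.range (n + 1), (k.factorial : ℝ)⁻¹ • (N ^ k * X) -
      ‖exp N * X‖⁻¹ • (exp N * X)‖
      ≤ 2 * (‖N‖ ^ (n + 1) / (n + 1).factorial) * Real.exp (2 * ‖N‖) := by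
  have hlow := norm_le_exp_norm_mul_norm_exp_mul N X
  have hG : exp N * X ≠ 0 := fun h => hX (by simpa [h] using hlow)
  refine (norm_inv_norm_smul_sub_inv_norm_smul_le _ hG).trans ?_
  calc 2 * ‖_ - exp N * X‖ / ‖exp N * X‖
      ≤ 2 * (‖N‖ ^ (n + 1) / (n + 1).factorial * Real.exp ‖N‖ * ‖X‖) / ‖exp N * X‖ := by
        rw [norm_sub_rev]; gcongr; exact norm_exp_mul_sub_sum_le N X (n + 1)
    _ ≤ 2 * (‖N‖ ^ (n + 1) / (n + 1).factorial * Real.exp ‖N‖ *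
          (Real.exp ‖N‖ * ‖exp N * X‖)) / ‖exp N * X‖ := by gcongr
    _ = 2 * (‖N‖ ^ (n + 1) / (n + 1).factorial) * Real.exp (2 * ‖N‖) := by
        rw [two_mul ‖N‖, Real.exp_add]; field_simp [norm_ne_zero_iff.mpr hG]

end BanachAlgebra

lemma mem_spectrum_of_pow_sub_smul_one_mul_eq_zero {𝕜 R : Type*} [Field 𝕜] [Ring R] [Algebra 𝕜 R]
    {a u : R} {μ : 𝕜} {k : ℕ} (hu : u ≠ 0) (hk : (a - μ • 1) ^ k * u = 0) :
    μ ∈ spectrum 𝕜 a := by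
  rw [spectrum.mem_iff, Algebra.algebraMap_eq_smul_one, ← neg_sub, IsUnit.neg_iff]
  exact fun h => hu ((h.pow k).mul_right_eq_zero.mp hk)

section GeneralizedEigenspace

variable {m : ℕ} {A P : Matrix (Fin m) (Fin m) ℝ} {s : ℝ}

lemma mem_GEsub_of_pow_mulVec_eq_zero {x : Fin m → ℝ} (k : ℕ)
    (hx : ((A - s • 1) ^ k) *ᵥ x = 0) : x ∈ GEsub A s :=
  ⟨k + 1, by omega, by rw [pow_succ', ← mulVec_mulVec, hx, mulVec_zero]⟩

lemma pow_mulVec_eq_zero_of_mem_GEsub {x : Fin m → ℝ} (hx : x ∈ GEsub A s) :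
    ((A - s • 1) ^ m) *ᵥ x = 0 := by
  obtain ⟨k, -, hk⟩ := hx
  have hker := Module.End.ker_pow_le_ker_pow_finrank (toLin' (A - s • 1)) k
  rw [Module.finrank_fin_fun, ← toLin'_pow, ← toLin'_pow] at hker
  exact hker hk

lemma mulVec_eq_self_of_mem_GEsub (hPidem : P * P = P)
    (hPrange : Set.range P.mulVec = (GEsub A s : Set (Fin m → ℝ))) {x : Fin m → ℝ}
    (hx : x ∈ GEsub A s) : P *ᵥ x = x := by
  rw [← SetLike.mem_coe, ← hPrange] at hx
  obtain ⟨y, rfl⟩ := hx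
  rw [mulVec_mulVec, hPidem]

lemma mul_eq_self_of_pow_mul_eq_zero (hPidem : P * P = P)
    (hPrange : Set.range P.mulVec = (GEsub A s : Set (Fin m → ℝ))) {Y : Matrix (Fin m) (Fin m) ℝ}
    {k : ℕ} (hY : (A - s • 1) ^ k * Y = 0) : P * Y = Y := by
  refine ext_iff_mulVec.2 fun v => ?_
  rw [← mulVec_mulVec]
  exact mulVec_eq_self_of_mem_GEsub hPidem hPrange
    (mem_GEsub_of_pow_mulVec_eq_zero k (by rw [mulVec_mulVec, hY, zero_mulVec]))

lemma pow_sub_smul_one_mul_eq_zero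
    (hPrange : Set.range P.mulVec = (GEsub A s : Set (Fin m → ℝ))) :
    (A - s • 1) ^ m * P = 0 := by
  refine ext_iff_mulVec.2 fun v => ?_
  rw [← mulVec_mulVec, zero_mulVec]
  exact pow_mulVec_eq_zero_of_mem_GEsub (by rw [← SetLike.mem_coe, ← hPrange]; exact ⟨v, rfl⟩)

lemma mul_ne_zero_of_mem_spectrum (hs : s ∈ spectrum ℝ A) (hPidem : P * P = P)
    (hPrange : Set.range P.mulVec = (GEsub A s : Set (Fin m → ℝ)))
    {V : Matrix (Fin m) (Fin m) ℝ} (hV : IsUnit V) : P * V ≠ 0 := by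
  rw [← spectrum_toLin', ← Module.End.hasEigenvalue_iff_mem_spectrum] at hs
  obtain ⟨v, hv⟩ := hs.exists_hasEigenvector
  have hker : (A - s • 1) *ᵥ v = 0 := by
    rw [sub_mulVec, smul_mulVec, one_mulVec, ← toLin'_apply, hv.apply_eq_smul, sub_self]
  rw [Ne, hV.mul_left_eq_zero]
  rintro rfl
  exact hv.2 ((mulVec_eq_self_of_mem_GEsub hPidem hPrange
    (mem_GEsub_of_pow_mulVec_eq_zero 1 (by rwa [pow_one]))).symm.trans (zero_mulVec v))

end GeneralizedEigenspace

lemma map_re_map_ofReal_mul {n : Type*} [Fintype n] (B : Matrix n n ℝ) (X : Matrix n n ℂ) :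
    (B.map Complex.ofReal * X).map Complex.re = B * X.map Complex.re := by
  ext i j; simp [mul_apply, Complex.re_sum]

lemma map_im_map_ofReal_mul {n : Type*} [Fintype n] (B : Matrix n n ℝ) (X : Matrix n n ℂ) :
    (B.map Complex.ofReal * X).map Complex.im = B * X.map Complex.im := by
  ext i j; simp [mul_apply, Complex.im_sum]

lemma map_ofReal_mul_eq_self_of_pow_mul_eq_zero {m : ℕ} {A P : Matrix (Fin m) (Fin m) ℝ} {s : ℝ}
    (hPidem : P * P = P) (hPrange : Set.range P.mulVec = (GEsub A s : Set (Fin m → ℝ)))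
    {X : Matrix (Fin m) (Fin m) ℂ} {k : ℕ} (hX : ((A - s • 1) ^ k).map Complex.ofReal * X = 0) :
    P.map Complex.ofReal * X = X := by
  have hre := mul_eq_self_of_pow_mul_eq_zero hPidem hPrange
    (by rw [← map_re_map_ofReal_mul, hX]; exact Matrix.map_zero _ Complex.zero_re)
  have him := mul_eq_self_of_pow_mul_eq_zero hPidem hPrange
    (by rw [← map_im_map_ofReal_mul, hX]; exact Matrix.map_zero _ Complex.zero_im)
  ext i j
  apply Complex.ext
  · simpa using congrFun₂ ((map_re_map_ofReal_mul P X).trans hre) i j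
  · simpa using congrFun₂ ((map_im_map_ofReal_mul P X).trans him) i j

lemma exists_pos_forall_re_add_lt_of_finite {S : Set ℂ} (hS : S.Finite) {s : ℝ}
    (h : ∀ μ ∈ S, μ ≠ s → μ.re < s) : ∃ δ > 0, ∀ μ ∈ S, μ ≠ s → μ.re + δ < s := by
  refine (eventually_mem_nhdsWithin.and (hS.eventually_all.2 fun μ hμ => ?_)).exists
    (f := 𝓝[>] 0)
  by_cases hμs : μ = s
  · exact Eventually.of_forall fun _ h => absurd hμs h
  filter_upwards [nhdsWithin_le_nhds (eventually_lt_nhds (sub_pos.2 (h μ hμ hμs)))] with δ hδ _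
  linarith

section MatrixNorms

attribute [local instance] Matrix.frobeniusNormedAddCommGroup Matrix.frobeniusNormedSpace
  Matrix.frobeniusNormedRing Matrix.frobeniusNormedAlgebra

section Complex

variable {n : Type*} [Fintype n] [DecidableEq n]

lemma exists_norm_exp_smul_sub_mul_le_of_pow_sub_mul_eq_zero {B u : Matrix n n ℂ} {μ : ℂ} {k : ℕ}
    (hk : (B - μ • 1) ^ k * u = 0) {s δ : ℝ} (hμ : μ.re + δ < s) :
    ∃ C, ∀ t : ℝ, 0 ≤ t → ‖exp (t • (B - (s : ℂ) • 1)) * u‖ ≤ C * Real.exp (-δ * t) := by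
  obtain ⟨C, hC⟩ := exists_norm_exp_smul_mul_le_of_pow_mul_eq_zero hk (ε := s - μ.re - δ)
    (by linarith)
  refine ⟨C, fun t ht => ?_⟩
  have hsplit : t • (B - (s : ℂ) • 1) = algebraMap ℂ _ (t * (μ - s)) + t • (B - μ • 1) := by
    rw [Algebra.algebraMap_eq_smul_one, ← Complex.real_smul, smul_assoc, ← smul_add, sub_smul]
    congr 1; abel
  have hexp : exp (t • (B - (s : ℂ) • 1)) = Complex.exp (t * (μ - s)) • exp (t • (B - μ • 1)) := by
    rw [hsplit, Complex.exp_eq_exp_ℂ]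
    exact exp_algebraMap_add _ _
  rw [hexp, smul_mul_assoc, norm_smul, Complex.norm_exp]
  calc Real.exp (t * (μ - s)).re * ‖exp (t • (B - μ • 1)) * u‖
      ≤ Real.exp (t * (μ.re - s)) * (C * Real.exp ((s - μ.re - δ) * t)) := by
        gcongr
        · simp
        · exact hC t ht
    _ = C * Real.exp (-δ * t) := by
        rw [mul_left_comm, ← Real.exp_add]; ring_nf

lemma exists_norm_exp_smul_sub_mul_mul_le {B Q : Matrix n n ℂ} {s : ℝ}
    (hB : ∀ μ ∈ spectrum ℂ B, μ ≠ s → μ.re < s) (hQB : Commute Q B)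
    (hQ : ∀ (k : ℕ) (X : Matrix n n ℂ), (B - (s : ℂ) • 1) ^ k * X = 0 → Q * X = 0)
    (W : Matrix n n ℂ) :
    ∃ C, ∃ δ > 0, ∀ t : ℝ, 0 ≤ t →
      ‖exp (t • (B - (s : ℂ) • 1)) * (Q * W)‖ ≤ C * Real.exp (-δ * t) := by
  obtain ⟨δ, hδpos, hδ⟩ := exists_pos_forall_re_add_lt_of_finite (Matrix.finite_spectrum B) hB
  set ℓ : Module.End ℂ (Matrix n n ℂ) := LinearMap.mulLeft ℂ B
  have hW : W ∈ ⨆ μ, ℓ.maxGenEigenspace μ := by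
    rw [Module.End.iSup_maxGenEigenspace_eq_top]; trivial
  obtain ⟨f, hf, rfl⟩ := (Submodule.mem_iSup_iff_exists_finsupp _ _).1 hW
  have hterm (μ : ℂ) : ∃ C, ∀ t : ℝ, 0 ≤ t →
      ‖exp (t • (B - (s : ℂ) • 1)) * (Q * f μ)‖ ≤ C * Real.exp (-δ * t) := by
    obtain ⟨k, hk⟩ := (Module.End.mem_maxGenEigenspace _ _ _).1 (hf μ)
    have hℓ : ℓ - μ • 1 = LinearMap.mulLeft ℂ (B - μ • 1) := by
      ext X : 1; simp [ℓ, sub_mul]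
    rw [hℓ, LinearMap.pow_mulLeft, LinearMap.mulLeft_apply] at hk
    by_cases hQf : Q * f μ = 0
    · exact ⟨0, fun t _ => by simp [hQf]⟩
    have hμs : μ ≠ s := by
      rintro rfl; exact hQf (hQ k _ hk)
    have hQk : (B - μ • 1) ^ k * (Q * f μ) = 0 := by
      rw [← mul_assoc, ← ((hQB.sub_right ((Commute.one_right Q).smul_right μ)).pow_right k).eq,
        mul_assoc, hk, mul_zero]
    exact exists_norm_exp_smul_sub_mul_le_of_pow_sub_mul_eq_zero hQk
      (hδ μ (mem_spectrum_of_pow_sub_smul_one_mul_eq_zero hQf hQk) hμs)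
  choose C hC using hterm
  refine ⟨∑ μ ∈ f.support, C μ, δ, hδpos, fun t ht => ?_⟩
  rw [Finsupp.sum, Finset.mul_sum, Finset.mul_sum, Finset.sum_mul]
  exact (norm_sum_le _ _).trans (Finset.sum_le_sum fun μ _ => hC μ t ht)

end Complex

section Real

variable {m : ℕ}

lemma fnorm_eq_norm (M : Matrix (Fin m) (Fin m) ℝ) : fnorm M = ‖M‖ := by
  simp [fnorm, frobenius_norm_def, Real.sqrt_eq_rpow, Real.norm_eq_abs, sq_abs]

lemma texp_mul_eq_sum (A V : Matrix (Fin m) (Fin m) ℝ) (n : ℕ) (t : ℝ) :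
    texp A n t * V = ∑ k ∈ Finset.range (n + 1), (k.factorial : ℝ)⁻¹ • ((t • A) ^ k * V) := by
  simp only [texp, Finset.sum_mul, smul_mul_assoc, smul_pow, smul_smul, inv_mul_eq_div]

lemma exp_smul_eq_smul_exp_smul_sub {n : Type*} [Fintype n] [DecidableEq n]
    (A : Matrix n n ℝ) (s t : ℝ) : exp (t • A) = Real.exp (t * s) • exp (t • (A - s • 1)) := by
  have hsplit : t • A = algebraMap ℝ _ (t * s) + t • (A - s • 1) := by
    rw [Algebra.algebraMap_eq_smul_one, smul_sub, smul_smul]; abel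
  rw [hsplit, Real.exp_eq_exp_ℝ]
  exact exp_algebraMap_add _ _

variable {A P : Matrix (Fin m) (Fin m) ℝ} {s : ℝ}

lemma exists_norm_exp_smul_sub_mul_one_sub_mul_le
    (hperron : ∀ μ ∈ spectrum ℂ (A.map Complex.ofReal), μ ≠ (s : ℂ) → μ.re < s)
    (hPidem : P * P = P) (hPcomm : P * A = A * P)
    (hPrange : Set.range P.mulVec = (GEsub A s : Set (Fin m → ℝ)))
    (V : Matrix (Fin m) (Fin m) ℝ) :
    ∃ C, ∃ δ > 0, ∀ t : ℝ, 0 ≤ t →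
      ‖exp (t • (A - s • 1)) * ((1 - P) * V)‖ ≤ C * Real.exp (-δ * t) := by
  set φ : Matrix (Fin m) (Fin m) ℝ →ₐ[ℝ] Matrix (Fin m) (Fin m) ℂ := Complex.ofRealAm.mapMatrix
  have hφ (M : Matrix (Fin m) (Fin m) ℝ) : φ M = M.map Complex.ofReal := rfl
  have hsub : φ (A - s • 1) = A.map Complex.ofReal - (s : ℂ) • 1 := by
    rw [map_sub, map_smul, map_one, hφ, Complex.coe_smul]
  have hcomm : Commute (φ (1 - P)) (A.map Complex.ofReal) := by
    rw [← hφ]; exact ((Commute.one_left A).sub_left hPcomm).map φ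
  have hQ (k : ℕ) (X : Matrix (Fin m) (Fin m) ℂ)
      (hX : (A.map Complex.ofReal - (s : ℂ) • 1) ^ k * X = 0) : φ (1 - P) * X = 0 := by
    rw [← hsub, ← map_pow, hφ] at hX
    rw [map_sub, map_one, sub_mul, one_mul, hφ,
      map_ofReal_mul_eq_self_of_pow_mul_eq_zero hPidem hPrange hX, sub_self]
  obtain ⟨C, δ, hδ, hC⟩ := exists_norm_exp_smul_sub_mul_mul_le hperron hcomm hQ (φ V)
  refine ⟨C, δ, hδ, fun t ht => ?_⟩
  have hnorm (M : Matrix (Fin m) (Fin m) ℝ) : ‖φ M‖ = ‖M‖ :=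
    frobenius_norm_map_eq _ _ Complex.norm_real
  have hexp (M : Matrix (Fin m) (Fin m) ℝ) : φ (exp M) = exp (φ M) :=
    map_exp φ φ.toLinearMap.continuous_of_finiteDimensional M
  rw [← hnorm, map_mul, hexp, map_mul, map_smul, hsub]
  exact hC t ht

lemma exists_norm_normalized_exp_mul_sub_normalized_exp_mul_mul_le (hs : s ∈ spectrum ℝ A)
    (hperron : ∀ μ ∈ spectrum ℂ (A.map Complex.ofReal), μ ≠ (s : ℂ) → μ.re < s)
    (hPidem : P * P = P) (hPcomm : P * A = A * P)
    (hPrange : Set.range P.mulVec = (GEsub A s : Set (Fin m → ℝ)))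
    {V : Matrix (Fin m) (Fin m) ℝ} (hV : IsUnit V) :
    ∃ B₀ > 0, ∃ δ > 0, ∀ t : ℝ, 0 ≤ t →
      ‖‖exp (t • (A - s • 1)) * V‖⁻¹ • (exp (t • (A - s • 1)) * V) -
          ‖exp (t • (A - s • 1)) * (P * V)‖⁻¹ • (exp (t • (A - s • 1)) * (P * V))‖
        ≤ B₀ * Real.exp (-δ * t) := by
  obtain ⟨C, δ, hδ, hdecay⟩ :=
    exists_norm_exp_smul_sub_mul_one_sub_mul_le hperron hPidem hPcomm hPrange V
  have hnil : (-(A - s • 1)) ^ m * P = 0 := by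
    rw [neg_pow, mul_assoc, pow_sub_smul_one_mul_eq_zero hPrange, mul_zero]
  obtain ⟨C₂, hgrowth⟩ := exists_norm_exp_smul_mul_le_of_pow_mul_eq_zero hnil (half_pos hδ)
  have hPV := norm_pos_iff.2 (mul_ne_zero_of_mem_spectrum hs hPidem hPrange hV)
  have hC : 0 ≤ C := by simpa using (norm_nonneg _).trans (hdecay 0 le_rfl)
  have hC₂ : 0 ≤ C₂ := by simpa using (norm_nonneg _).trans (hgrowth 0 le_rfl)
  refine ⟨max (2 * C * C₂ / ‖P * V‖) 1, lt_max_of_lt_right one_pos, δ / 2, half_pos hδ,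
    fun t ht => ?_⟩
  set E := exp (t • (A - s • 1))
  have hPA : Commute P A := hPcomm
  have hPM : Commute P (t • (A - s • 1)) :=
    (hPA.sub_right ((Commute.one_right P).smul_right s)).smul_right t
  have hlow : ‖P * V‖ ≤ C₂ * Real.exp (δ / 2 * t) * ‖E * (P * V)‖ := by
    have h : ‖P * V‖ ≤ ‖exp (-(t • (A - s • 1))) * P‖ * ‖E * (P * V)‖ :=
      norm_mul_le_norm_exp_neg_mul_mul_norm_exp_mul hPidem hPM V
    rw [← smul_neg] at h
    exact h.trans (by gcongr; exact hgrowth t ht)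
  have hZ : 0 < ‖E * (P * V)‖ := by
    by_contra! h
    rw [le_antisymm h (norm_nonneg _), mul_zero] at hlow
    linarith
  refine (norm_inv_norm_smul_sub_inv_norm_smul_le _ (norm_pos_iff.1 hZ)).trans ?_
  have hEZ : E * V - E * (P * V) = E * ((1 - P) * V) := by rw [sub_mul, one_mul, mul_sub]
  have hZinv : ‖E * (P * V)‖⁻¹ ≤ C₂ * Real.exp (δ / 2 * t) / ‖P * V‖ := by
    rw [inv_eq_one_div, div_le_div_iff₀ hZ hPV]; linarith
  rw [hEZ]
  calc 2 * ‖E * ((1 - P) * V)‖ / ‖E * (P * V)‖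
      ≤ 2 * (C * Real.exp (-δ * t)) * ‖E * (P * V)‖⁻¹ := by
        rw [div_eq_mul_inv]; gcongr; exact hdecay t ht
    _ ≤ 2 * (C * Real.exp (-δ * t)) * (C₂ * Real.exp (δ / 2 * t) / ‖P * V‖) := by gcongr
    _ = 2 * C * C₂ / ‖P * V‖ * Real.exp (-(δ / 2) * t) := by
        rw [show -(δ / 2) * t = -δ * t + δ / 2 * t by ring, Real.exp_add]; ring
    _ ≤ max (2 * C * C₂ / ‖P * V‖) 1 * Real.exp (-(δ / 2) * t) := by
        gcongr; exact le_max_left _ _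

theorem stmt11_general {m : ℕ} (A : Matrix (Fin m) (Fin m) ℝ) (s : ℝ)
    (hs : s ∈ spectrum ℝ A)
    (hperron : ∀ μ ∈ spectrum ℂ (A.map Complex.ofReal), μ ≠ (s : ℂ) → μ.re < s)
    (P : Matrix (Fin m) (Fin m) ℝ)
    (hPidem : P * P = P) (hPcomm : P * A = A * P)
    (hPrange : Set.range P.mulVec = (GEsub A s : Set (Fin m → ℝ)))
    (V : Matrix (Fin m) (Fin m) ℝ) (hV : IsUnit V) :
    ∃ κ : ℝ, 0 < κ ∧ ∃ B₀ : ℝ, 0 < B₀ ∧ ∃ δ : ℝ, 0 < δ ∧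
      ∀ n : ℕ, ∀ t : ℝ, 1 ≤ t → texp A n t * V ≠ 0 →
        fnorm ((fnorm (texp A n t * V))⁻¹ • (texp A n t * V) -
            (fnorm (mexp (t • (A - s • 1)) * (P * V)))⁻¹ • (mexp (t • (A - s • 1)) * (P * V)))
          ≤ B₀ * Real.exp (-δ * t) +
            (2 / κ) * ((t * fnorm A) ^ (n + 1) / (Nat.factorial (n + 1) : ℝ)) *
              Real.exp (2 * fnorm A * t) := by
  obtain ⟨B₀, hB₀, δ, hδ, hspectral⟩ :=
    exists_norm_normalized_exp_mul_sub_normalized_exp_mul_mul_le hs hperron hPidem hPcomm hPrange hV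
  have hV0 : V ≠ 0 := right_ne_zero_of_mul (mul_ne_zero_of_mem_spectrum hs hPidem hPrange hV)
  refine ⟨1, one_pos, B₀, hB₀, δ, hδ, fun n t ht _ => ?_⟩
  have ht0 : 0 ≤ t := zero_le_one.trans ht
  have htaylor : ‖‖texp A n t * V‖⁻¹ • (texp A n t * V) - ‖exp (t • A) * V‖⁻¹ • (exp (t • A) * V)‖
      ≤ 2 * (‖t • A‖ ^ (n + 1) / (n + 1).factorial) * Real.exp (2 * ‖t • A‖) := by
    rw [texp_mul_eq_sum]; exact norm_normalized_sum_sub_normalized_exp_mul_le (t • A) V hV0 n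
  rw [exp_smul_eq_smul_exp_smul_sub A s t, smul_mul_assoc,
    inv_norm_smul_smul_of_pos (Real.exp_pos _), norm_smul, Real.norm_of_nonneg ht0] at htaylor
  simp only [fnorm_eq_norm, mexp]
  refine (norm_sub_le_norm_sub_add_norm_sub _ _ _).trans
    ((add_le_add htaylor (hspectral t ht0)).trans_eq (by ring_nf))

/-- For a Perron-like A with principal eigenvalue s, spectral projection P onto
GE_s(A), and nonsingular V with ‖V‖ = 1, Y = PV, X_n(t) = ∑_{k≤n} (t^k/k!)A^kV, there are
κ, B₀, δ > 0 such that for every n and t ≥ 1 with X_n(t) ≠ 0 one has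
‖X_n(t)/‖X_n(t)‖ − e^{t(A−sI)}Y/‖e^{t(A−sI)}Y‖‖ ≤ B₀e^{−δt} + (2/κ)((t‖A‖)^{n+1}/(n+1)!)e^{2‖A‖t}. -/
theorem stmt11 {m : ℕ} (A : Matrix (Fin m) (Fin m) ℝ) (s : ℝ)
    (hs : s ∈ spectrum ℝ A)
    (hperron : ∀ μ ∈ spectrum ℂ (A.map Complex.ofReal), μ ≠ (s : ℂ) → μ.re < s)
    (P : Matrix (Fin m) (Fin m) ℝ)
    (hPidem : P * P = P) (hPcomm : P * A = A * P)
    (hPrange : Set.range P.mulVec = (GEsub A s : Set (Fin m → ℝ)))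
    (V : Matrix (Fin m) (Fin m) ℝ) (hV : IsUnit V) (hVnorm : fnorm V = 1) :
    ∃ κ : ℝ, 0 < κ ∧ ∃ B₀ : ℝ, 0 < B₀ ∧ ∃ δ : ℝ, 0 < δ ∧
      ∀ n : ℕ, ∀ t : ℝ, 1 ≤ t → texp A n t * V ≠ 0 →
        fnorm ((fnorm (texp A n t * V))⁻¹ • (texp A n t * V) -
            (fnorm (mexp (t • (A - s • 1)) * (P * V)))⁻¹ • (mexp (t • (A - s • 1)) * (P * V)))
          ≤ B₀ * Real.exp (-δ * t) +
            (2 / κ) * ((t * fnorm A) ^ (n + 1) / (Nat.factorial (n + 1) : ℝ)) *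
              Real.exp (2 * fnorm A * t) :=
  stmt11_general A s hs hperron P hPidem hPcomm hPrange V hV

end Real

end MatrixNorms
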